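/- arXiv:2311.09928 — 4 statements merged into one kernel-verified Lean document; each statement's English description precedes it below -/
import Mathlib

section
/- Let Γ : ℝᴺ → H be a linear map to a Hilbert space with group structure, ‖z‖₁,₂ the group norm, λ > 0, y ∈ H. Then z is a minimizer of (1/2)‖Γz − y‖² + λ‖z‖₁,₂ if and only if for p = (y − Γz)/λ one has: ‖Γᵢ* p‖₂ ≤ 1 for every group i, and Γᵢ* p = zᵢ/‖zᵢ‖ for every group i with zᵢ ≠ 0. -/
open scoped BigOperators
open scoped RealInnerProductSpace

set_option maxHeartbeats 1000000

lemma aux_le_zero (a C : ℝ) (hC : 0 ≤ C) (h : ∀ t : ℝ, 0 < t → a ≤ t * C) : a ≤ 0 := by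
  by_contra h'
  push_neg at h'
  have ht : (0:ℝ) < a / (2 * (C + 1)) := by positivity
  have := h _ ht
  rw [div_mul_eq_mul_div, le_div_iff₀ (by positivity)] at this
  nlinarith

lemma aux_norm_diff {E : Type*} [NormedAddCommGroup E] (x zz : E) (hz : zz ≠ 0) :
    ‖x‖ - ‖zz‖ ≤ (‖x‖ ^ 2 - ‖zz‖ ^ 2) / (2 * ‖zz‖) := by
  have h1 : 0 < ‖zz‖ := norm_pos_iff.mpr hz
  rw [le_div_iff₀ (by positivity)]
  nlinarith [sq_nonneg (‖x‖ - ‖zz‖)]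

lemma aux_sum_update {H : Type*} [NormedAddCommGroup H] [InnerProductSpace ℝ H]
    {G : Type*} [Fintype G] [DecidableEq G] (n : G → ℕ)
    (Γ : ∀ i : G, EuclideanSpace ℝ (Fin (n i)) →L[ℝ] H)
    (z : ∀ i : G, EuclideanSpace ℝ (Fin (n i))) (i : G)
    (a : EuclideanSpace ℝ (Fin (n i))) :
    ∑ j, Γ j (Function.update z i a j) = (∑ j, Γ j (z j)) - Γ i (z i) + Γ i a := by
  have h : ∀ j, Γ j (Function.update z i a j)
      = Γ j (z j) + if j = i then (Γ i a - Γ i (z i)) else 0 := by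
    intro j
    by_cases hj : j = i
    · subst hj; simp
    · simp [Function.update_of_ne hj, hj]
  simp only [h, Finset.sum_add_distrib, Finset.sum_ite_eq' Finset.univ i,
    Finset.mem_univ, if_true]
  abel

lemma aux_norm_sum_update {G : Type*} [Fintype G] [DecidableEq G] (n : G → ℕ)
    (z : ∀ i : G, EuclideanSpace ℝ (Fin (n i))) (i : G)
    (a : EuclideanSpace ℝ (Fin (n i))) :
    ∑ j, ‖Function.update z i a j‖ = (∑ j, ‖z j‖) - ‖z i‖ + ‖a‖ := by
  have h : ∀ j, ‖Function.update z i a j‖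
      = ‖z j‖ + if j = i then (‖a‖ - ‖z i‖) else 0 := by
    intro j
    by_cases hj : j = i
    · subst hj; simp
    · simp [Function.update_of_ne hj, hj]
  simp only [h, Finset.sum_add_distrib, Finset.sum_ite_eq' Finset.univ i,
    Finset.mem_univ, if_true]
  ring

/-- First-order optimality condition for the group Lasso. -/
theorem stmt_4 {H : Type*} [NormedAddCommGroup H] [InnerProductSpace ℝ H] [CompleteSpace H]
    {G : Type*} [Fintype G] (n : G → ℕ)
    (Γ : ∀ i : G, EuclideanSpace ℝ (Fin (n i)) →L[ℝ] H)
    (y : H) (l : ℝ) (hl : 0 < l)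
    (z : ∀ i : G, EuclideanSpace ℝ (Fin (n i))) :
    (∀ w : ∀ i : G, EuclideanSpace ℝ (Fin (n i)),
        (1 / 2) * ‖(∑ i, Γ i (z i)) - y‖ ^ 2 + l * ∑ i, ‖z i‖
          ≤ (1 / 2) * ‖(∑ i, Γ i (w i)) - y‖ ^ 2 + l * ∑ i, ‖w i‖)
    ↔ (∀ i : G,
        ‖(ContinuousLinearMap.adjoint (Γ i)) (l⁻¹ • (y - ∑ j, Γ j (z j)))‖ ≤ 1
        ∧ (z i ≠ 0 →
          (ContinuousLinearMap.adjoint (Γ i)) (l⁻¹ • (y - ∑ j, Γ j (z j)))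
            = (‖z i‖)⁻¹ • z i)) := by
  classical
  set r : H := (∑ j, Γ j (z j)) - y with hr
  have hyz : l⁻¹ • (y - ∑ j, Γ j (z j)) = (-l⁻¹) • r := by
    rw [hr, neg_smul, ← smul_neg, neg_sub]
  constructor
  · intro hmin i
    set q : EuclideanSpace ℝ (Fin (n i)) := (ContinuousLinearMap.adjoint (Γ i)) r with hq
    -- key inequality
    have key : ∀ (t : ℝ), 0 < t → ∀ v : EuclideanSpace ℝ (Fin (n i)),
        0 ≤ t * ⟪q, v⟫ + t ^ 2 / 2 * ‖Γ i v‖ ^ 2 + l * (‖z i + t • v‖ - ‖z i‖) := by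
      intro t ht v
      have h := hmin (Function.update z i (z i + t • v))
      rw [aux_sum_update, aux_norm_sum_update] at h
      have e1 : (∑ j, Γ j (z j)) - Γ i (z i) + Γ i (z i + t • v) - y = r + t • Γ i v := by
        rw [map_add, map_smul, hr]; abel
      rw [e1, norm_add_sq_real] at h
      have e2 : ⟪r, t • Γ i v⟫ = t * ⟪q, v⟫ := by
        rw [real_inner_smul_right, hq, ContinuousLinearMap.adjoint_inner_left]
      have e3 : ‖t • Γ i v‖ ^ 2 = t ^ 2 * ‖Γ i v‖ ^ 2 := by
        rw [norm_smul, mul_pow, Real.norm_eq_abs, sq_abs]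
      rw [e2, e3] at h
      nlinarith [h]
    have hq1 : ‖q‖ ≤ l := by
      have h0 : ‖q‖ ^ 2 - l * ‖q‖ ≤ 0 := by
        apply aux_le_zero _ (‖Γ i q‖ ^ 2 / 2) (by positivity)
        intro t ht
        have h := key t ht (-q)
        have e1 : ⟪q, -q⟫ = -‖q‖ ^ 2 := by
          rw [inner_neg_right, real_inner_self_eq_norm_sq]
        have e2 : ‖z i + t • (-q)‖ - ‖z i‖ ≤ t * ‖q‖ := by
          have := norm_add_le (z i) (t • (-q))
          have e3 : ‖t • (-q)‖ = t * ‖q‖ := by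
            rw [norm_smul, norm_neg, Real.norm_eq_abs, abs_of_pos ht]
          linarith
        have e4 : ‖Γ i (-q)‖ = ‖Γ i q‖ := by rw [map_neg, norm_neg]
        rw [e1, e4] at h
        have hlq : l * (‖z i + t • (-q)‖ - ‖z i‖) ≤ l * (t * ‖q‖) :=
          mul_le_mul_of_nonneg_left e2 hl.le
        have := h.trans (by linarith : t * (-‖q‖ ^ 2) + t ^ 2 / 2 * ‖Γ i q‖ ^ 2
            + l * (‖z i + t • (-q)‖ - ‖z i‖)
            ≤ t * (-‖q‖ ^ 2) + t ^ 2 / 2 * ‖Γ i q‖ ^ 2 + l * (t * ‖q‖))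
        -- 0 ≤ -t‖q‖² + t²/2 C + l t ‖q‖ ⟹ ‖q‖² − l‖q‖ ≤ t * (C/2)
        have ht' : 0 < t := ht
        nlinarith [this]
      by_cases hq0 : q = 0
      · simp [hq0]; linarith
      · have : 0 < ‖q‖ := norm_pos_iff.mpr hq0
        nlinarith
    constructor
    · rw [hyz, map_smul, norm_smul, Real.norm_eq_abs, abs_neg, abs_of_pos (by positivity)]
      calc l⁻¹ * ‖q‖ ≤ l⁻¹ * l := by
            apply mul_le_mul_of_nonneg_left hq1 (by positivity)
        _ = 1 := inv_mul_cancel₀ hl.ne'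
    · intro hz
      have hnz : 0 < ‖z i‖ := norm_pos_iff.mpr hz
      set u : EuclideanSpace ℝ (Fin (n i)) := (l * ‖z i‖⁻¹) • z i + q with hu
      have hu0 : u = 0 := by
        have h0 : ‖u‖ ^ 2 ≤ 0 := by
          apply aux_le_zero _ (‖Γ i u‖ ^ 2 / 2 + l * ‖u‖ ^ 2 / (2 * ‖z i‖)) (by positivity)
          intro t ht
          have h := key t ht (-u)
          have e1 : ⟪q, -u⟫ = -⟪u, q⟫ := by
            rw [inner_neg_right, real_inner_comm]
          have e4 : ‖Γ i (-u)‖ = ‖Γ i u‖ := by rw [map_neg, norm_neg]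
          have e2 : ‖z i + t • (-u)‖ - ‖z i‖
              ≤ (-(2 * t) * ⟪z i, u⟫ + t ^ 2 * ‖u‖ ^ 2) / (2 * ‖z i‖) := by
            have hb := aux_norm_diff (z i + t • (-u)) (z i) hz
            have e5 : ‖z i + t • (-u)‖ ^ 2
                = ‖z i‖ ^ 2 - 2 * t * ⟪z i, u⟫ + t ^ 2 * ‖u‖ ^ 2 := by
              rw [norm_add_sq_real, real_inner_smul_right, inner_neg_right,
                norm_smul, norm_neg, Real.norm_eq_abs, mul_pow, sq_abs]
              ring
            rw [e5] at hb
            calc ‖z i + t • (-u)‖ - ‖z i‖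
                ≤ (‖z i‖ ^ 2 - 2 * t * ⟪z i, u⟫ + t ^ 2 * ‖u‖ ^ 2 - ‖z i‖ ^ 2)
                    / (2 * ‖z i‖) := hb
              _ = (-(2 * t) * ⟪z i, u⟫ + t ^ 2 * ‖u‖ ^ 2) / (2 * ‖z i‖) := by ring
          rw [e1, e4] at h
          have hlq : l * (‖z i + t • (-u)‖ - ‖z i‖)
              ≤ l * ((-(2 * t) * ⟪z i, u⟫ + t ^ 2 * ‖u‖ ^ 2) / (2 * ‖z i‖)) :=
            mul_le_mul_of_nonneg_left e2 hl.le
          -- ‖u‖² = l ‖zᵢ‖⁻¹ ⟪zᵢ, u⟫ + ⟪u, q⟫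
          have eu : ‖u‖ ^ 2 = l * ‖z i‖⁻¹ * ⟪z i, u⟫ + ⟪u, q⟫ := by
            rw [← real_inner_self_eq_norm_sq]
            have : ⟪u, u⟫ = ⟪(l * ‖z i‖⁻¹) • z i + q, u⟫ := by rw [← hu]
            rw [this, inner_add_left, real_inner_smul_left, real_inner_comm q u]
          have hsplit : l * ((-(2 * t) * ⟪z i, u⟫ + t ^ 2 * ‖u‖ ^ 2) / (2 * ‖z i‖))
              = -t * (l * ‖z i‖⁻¹ * ⟪z i, u⟫) + t ^ 2 * (l * ‖u‖ ^ 2 / (2 * ‖z i‖)) := by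
            field_simp
          have htu : t * ‖u‖ ^ 2 = t * (l * ‖z i‖⁻¹ * ⟪z i, u⟫) + t * ⟪u, q⟫ := by
            rw [eu]; ring
          have hexp : t * (t * (‖Γ i u‖ ^ 2 / 2 + l * ‖u‖ ^ 2 / (2 * ‖z i‖)))
              = t ^ 2 / 2 * ‖Γ i u‖ ^ 2 + t ^ 2 * (l * ‖u‖ ^ 2 / (2 * ‖z i‖)) := by
            ring
          have h2 : t * ‖u‖ ^ 2 ≤ t * (t * (‖Γ i u‖ ^ 2 / 2 + l * ‖u‖ ^ 2 / (2 * ‖z i‖))) := by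
            rw [hexp]
            linarith [h, hlq, hsplit, htu]
          exact le_of_mul_le_mul_left h2 ht
        have : ‖u‖ = 0 := by nlinarith [norm_nonneg u]
        exact norm_eq_zero.mp this
      rw [hyz, map_smul, ← hq]
      have : q = -((l * ‖z i‖⁻¹) • z i) := by
        rw [eq_neg_iff_add_eq_zero, add_comm]; exact hu0
      rw [this, smul_neg, smul_smul, ← neg_smul]
      congr 1
      field_simp
  · intro h w
    set d : H := (∑ j, Γ j (w j)) - (∑ j, Γ j (z j)) with hd
    have e1 : (∑ j, Γ j (w j)) - y = r + d := by rw [hr, hd]; abel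
    rw [e1, norm_add_sq_real]
    have e2 : ⟪r, d⟫ = ∑ j, (-l) * ⟪(ContinuousLinearMap.adjoint (Γ j))
        (l⁻¹ • (y - ∑ k, Γ k (z k))), w j - z j⟫ := by
      have : d = ∑ j, (Γ j (w j) - Γ j (z j)) := by rw [hd, Finset.sum_sub_distrib]
      rw [this, inner_sum]
      apply Finset.sum_congr rfl
      intro j _
      have : Γ j (w j) - Γ j (z j) = Γ j (w j - z j) := by rw [map_sub]
      rw [this, ← ContinuousLinearMap.adjoint_inner_left]
      have hrr : r = (-l) • (l⁻¹ • (y - ∑ k, Γ k (z k))) := by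
        rw [smul_smul, hr]
        have : (-l) * l⁻¹ = -1 := by field_simp
        rw [this, neg_one_smul, neg_sub]
      rw [hrr, map_smul, real_inner_smul_left]
    have e3 : ∀ j, l * ‖w j‖ - l * ‖z j‖
        - l * ⟪(ContinuousLinearMap.adjoint (Γ j)) (l⁻¹ • (y - ∑ k, Γ k (z k))), w j - z j⟫
        ≥ 0 := by
      intro j
      set pj := (ContinuousLinearMap.adjoint (Γ j)) (l⁻¹ • (y - ∑ k, Γ k (z k))) with hpj
      have h1 : ⟪pj, w j⟫ ≤ ‖w j‖ := by
        calc ⟪pj, w j⟫ ≤ ‖pj‖ * ‖w j‖ := real_inner_le_norm pj (w j)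
          _ ≤ 1 * ‖w j‖ := mul_le_mul_of_nonneg_right (h j).1 (norm_nonneg _)
          _ = ‖w j‖ := one_mul _
      have h2 : ⟪pj, z j⟫ = ‖z j‖ := by
        by_cases hz : z j = 0
        · simp [hz]
        · rw [hpj, (h j).2 hz, real_inner_smul_left, real_inner_self_eq_norm_sq]
          have : 0 < ‖z j‖ := norm_pos_iff.mpr hz
          field_simp
      have : ⟪pj, w j - z j⟫ = ⟪pj, w j⟫ - ⟪pj, z j⟫ := inner_sub_right pj (w j) (z j)
      rw [this, h2]
      nlinarith [h1]
    have e4 : ∑ j, (l * ‖w j‖ - l * ‖z j‖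
        - l * ⟪(ContinuousLinearMap.adjoint (Γ j)) (l⁻¹ • (y - ∑ k, Γ k (z k))), w j - z j⟫)
        ≥ 0 := Finset.sum_nonneg fun j _ => e3 j
    rw [Finset.sum_sub_distrib, Finset.sum_sub_distrib, ← Finset.mul_sum, ← Finset.mul_sum,
      ← Finset.mul_sum] at e4
    have e5 : l * ∑ j, ⟪(ContinuousLinearMap.adjoint (Γ j))
        (l⁻¹ • (y - ∑ k, Γ k (z k))), w j - z j⟫ = -⟪r, d⟫ := by
      rw [e2, ← Finset.mul_sum]; ring
    nlinarith [sq_nonneg ‖d‖, e4, e5]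
end

section
/- Let M : ℝᵐ → ℝᵐ be linear with kernel K, let Q : ℝᵐ → ℝᵐ be an orthogonal projection with kernel ker(Q), and assume K ∩ ker(Q) = {0}. Let P = Id − Q (the projection onto ker(Q)) and let P_K be the orthogonal projection onto K. Then Id − P P_K P is invertible. -/
open RealInnerProductSpace


/-- Nullspace condition: if `ker M ∩ ker Q = {0}` for an orthogonal projection `Q`, then
`Id − P P_K P` is invertible, where `P = Id − Q` and `P_K` is the orthogonal projection
onto `K = ker M`. -/
theorem stmt_7 {m : ℕ}
    (M Q : EuclideanSpace ℝ (Fin m) →L[ℝ] EuclideanSpace ℝ (Fin m))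
    (hQsa : IsSelfAdjoint Q) (hQproj : Q.comp Q = Q)
    (h : LinearMap.ker M.toLinearMap ⊓ LinearMap.ker Q.toLinearMap = ⊥) :
    IsUnit ((1 : EuclideanSpace ℝ (Fin m) →L[ℝ] EuclideanSpace ℝ (Fin m))
      - ((1 - Q).comp (((LinearMap.ker M.toLinearMap).subtypeL.comp
          ((LinearMap.ker M.toLinearMap).orthogonalProjectionOnto)).comp (1 - Q)))) := by
  set E := EuclideanSpace ℝ (Fin m)
  set K := LinearMap.ker M.toLinearMap with hK
  set P : E →L[ℝ] E := 1 - Q with hPdef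
  set PK : E →L[ℝ] E := K.subtypeL.comp (K.orthogonalProjectionOnto) with hPKdef
  set T : E →L[ℝ] E := 1 - P.comp (PK.comp P) with hT
  rw [ContinuousLinearMap.isUnit_iff_bijective]
  have hPcomp : P.comp P = P := by
    simp only [hPdef, ContinuousLinearMap.comp_sub, ContinuousLinearMap.sub_comp,
      ContinuousLinearMap.comp_id, ContinuousLinearMap.id_comp, hQproj,
      ContinuousLinearMap.one_def]
    abel
  have hPidem : ∀ x : E, P (P x) = P x := by
    intro x
    calc P (P x) = (P.comp P) x := rfl
    _ = P x := by rw [hPcomp]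
  have hQsym : ∀ x y : E, ⟪Q x, y⟫ = ⟪x, Q y⟫ :=
    ContinuousLinearMap.isSelfAdjoint_iff_isSymmetric.mp hQsa
  have hPsym : ∀ x y : E, ⟪P x, y⟫ = ⟪x, P y⟫ := by
    intro x y
    simp only [hPdef, ContinuousLinearMap.sub_apply, ContinuousLinearMap.one_apply,
      inner_sub_left, inner_sub_right, hQsym x y]
  have hker : ∀ x : E, T x = 0 → x = 0 := by
    intro x hx
    have hxeq : x = P (PK (P x)) := by
      have := hx
      simp only [hT, ContinuousLinearMap.sub_apply, ContinuousLinearMap.one_apply,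
        ContinuousLinearMap.comp_apply, sub_eq_zero] at this
      exact this
    have hPx : P x = x := by
      calc P x = P (P (PK (P x))) := by rw [← hxeq]
      _ = P (PK (P x)) := hPidem _
      _ = x := hxeq.symm
    rw [hPx] at hxeq
    -- hxeq : x = P (PK x)
    have hmem : PK x ∈ K := (K.orthogonalProjectionOnto x).2
    have h1 : ⟪x - PK x, PK x⟫ = 0 :=
      K.starProjection_inner_eq_zero x (PK x) hmem
    have h2 : ⟪x, x⟫ = ⟪PK x, x⟫ := by
      calc ⟪x, x⟫ = ⟪P (PK x), x⟫ := by rw [← hxeq]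
      _ = ⟪PK x, P x⟫ := hPsym _ _
      _ = ⟪PK x, x⟫ := by rw [hPx]
    have h3 : ⟪x - PK x, x - PK x⟫ = 0 := by
      have h4 : ⟪x, PK x⟫ = ⟪PK x, x⟫ := real_inner_comm _ _
      simp only [inner_sub_left, inner_sub_right] at h1 ⊢
      linarith
    have h5 : x - PK x = 0 := inner_self_eq_zero.mp h3
    have hxK : x ∈ K := by
      have : x = PK x := by linear_combination (norm := module) h5
      rw [this]; exact hmem
    have hxQ : x ∈ LinearMap.ker Q.toLinearMap := by
      have : x - Q x = x := hPx
      have hq : Q x = 0 := by linear_combination (norm := module) this.symm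
      exact LinearMap.mem_ker.mpr hq
    have : x ∈ K ⊓ LinearMap.ker Q.toLinearMap := ⟨hxK, hxQ⟩
    rw [h] at this
    simpa using this
  have hinj : Function.Injective T := by
    have hkb : LinearMap.ker (T : E →ₗ[ℝ] E) = ⊥ :=
      LinearMap.ker_eq_bot'.mpr (fun x hx => hker x hx)
    exact LinearMap.ker_eq_bot.mp hkb
  exact ⟨hinj, (LinearMap.injective_iff_surjective (f := (T : E →ₗ[ℝ] E))).mp hinj⟩
end

section
/- With the notation of the single-spike SR-Lasso certificate: κ smooth even, κ(0) = 1, κ'(0) = 0, κ''(0) < 0, κ'''(0) = 0, g(x) = s_a κ(x) − (s_b/τ)·κ'(x)/|κ''(0)|^{1/2}, G(x) = g(x)² + (τ²/|κ''(0)|) g'(x)², s_a² + s_b² = 1, one has G''(0) = 2 κ''(0) ( s_a² (1 − τ²) + s_b² ( κ⁗(0)/κ''(0)² − τ^{−2} ) ). In particular, if τ² ∈ [κ''(0)²/κ⁗(0), 1] and (s_a, s_b) ≠ (0, ±1) when τ² = κ''(0)²/κ⁗(0) or (±1, 0) when τ = 1, then G''(0) ≤ 0, and G''(0) < 0 if both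 factors are strictly in the interior. -/
/-- Second derivative at `0` of the single-spike SR-Lasso certificate, and its sign
for `τ²` in the admissible interval. -/
theorem stmt_12 (κ : ℝ → ℝ) (hκ : ContDiff ℝ (⊤ : ℕ∞) κ)
    (hκ0 : κ 0 = 1) (hκ'0 : deriv κ 0 = 0)
    (hκ'' : iteratedDeriv 2 κ 0 < 0) (hκ''' : iteratedDeriv 3 κ 0 = 0)
    (hκ4 : 0 < iteratedDeriv 4 κ 0)
    (τ sa sb : ℝ) (hτ : 0 < τ) (hs : sa ^ 2 + sb ^ 2 = 1)
    (g G : ℝ → ℝ)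
    (hg : ∀ x, g x = sa * κ x - (sb / τ) * (deriv κ x / Real.sqrt |iteratedDeriv 2 κ 0|))
    (hG : ∀ x, G x = g x ^ 2 + (τ ^ 2 / |iteratedDeriv 2 κ 0|) * (deriv g x) ^ 2) :
    iteratedDeriv 2 G 0
        = 2 * iteratedDeriv 2 κ 0 *
          (sa ^ 2 * (1 - τ ^ 2)
            + sb ^ 2 * (iteratedDeriv 4 κ 0 / (iteratedDeriv 2 κ 0) ^ 2 - τ⁻¹ ^ 2))
    ∧ ((iteratedDeriv 2 κ 0) ^ 2 / iteratedDeriv 4 κ 0 ≤ τ ^ 2 → τ ^ 2 ≤ 1 →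
        iteratedDeriv 2 G 0 ≤ 0)
    ∧ ((iteratedDeriv 2 κ 0) ^ 2 / iteratedDeriv 4 κ 0 < τ ^ 2 → τ ^ 2 < 1 →
        iteratedDeriv 2 G 0 < 0) := by
  have hκ' : ContDiff ℝ ((⊤ : ℕ∞) : WithTop ℕ∞) κ := hκ.of_le (by simp)
  have hc1 : ContDiff ℝ ((⊤ : ℕ∞) : WithTop ℕ∞) (deriv κ) := (contDiff_infty_iff_deriv.mp hκ').2
  have hc2 : ContDiff ℝ ((⊤ : ℕ∞) : WithTop ℕ∞) (deriv (deriv κ)) := (contDiff_infty_iff_deriv.mp hc1).2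
  have hc3 : ContDiff ℝ ((⊤ : ℕ∞) : WithTop ℕ∞) (deriv (deriv (deriv κ))) := (contDiff_infty_iff_deriv.mp hc2).2
  have h2eq : iteratedDeriv 2 κ = deriv (deriv κ) := by
    simp [iteratedDeriv_succ, iteratedDeriv_zero]
  have h3eq : iteratedDeriv 3 κ = deriv (deriv (deriv κ)) := by
    simp [iteratedDeriv_succ, iteratedDeriv_zero]
  have h4eq : iteratedDeriv 4 κ = deriv (deriv (deriv (deriv κ))) := by
    simp [iteratedDeriv_succ, iteratedDeriv_zero]
  set a := iteratedDeriv 2 κ 0 with ha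
  set b := iteratedDeriv 4 κ 0 with hb
  set c := Real.sqrt |a| with hcdef
  set d := τ ^ 2 / |a| with hddef
  have hone : ((⊤ : ℕ∞) : WithTop ℕ∞) ≠ 0 := by simp
  have habs : |a| = -a := abs_of_neg hκ''
  have hcsq : c ^ 2 = -a := by
    rw [hcdef, Real.sq_sqrt (abs_nonneg a), habs]
  have hcpos : 0 < c := Real.sqrt_pos.mpr (by rw [habs]; linarith)
  have hcne : c ≠ 0 := ne_of_gt hcpos
  have hane : a ≠ 0 := ne_of_lt hκ''
  have hτne : τ ≠ 0 := ne_of_gt hτ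
  have va2 : deriv (deriv κ) 0 = a := by rw [ha, h2eq]
  have va3 : deriv (deriv (deriv κ)) 0 = 0 := by rw [← h3eq]; exact hκ'''
  have va4 : deriv (deriv (deriv (deriv κ))) 0 = b := by rw [hb, h4eq]
  -- key derivative lemma
  have key : ∀ f1 f2 : ℝ → ℝ, ContDiff ℝ ((⊤ : ℕ∞) : WithTop ℕ∞) f1 → deriv f1 = f2 → ContDiff ℝ ((⊤ : ℕ∞) : WithTop ℕ∞) f2 →
      deriv (fun x => sa * f1 x - sb / τ * (f2 x / c))
        = fun x => sa * f2 x - sb / τ * (deriv f2 x / c) := by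
    intro f1 f2 hf1 hd hf2
    funext x
    have h1 : HasDerivAt f1 (f2 x) x := by
      rw [← hd]; exact (hf1.differentiable hone x).hasDerivAt
    have h2 : HasDerivAt f2 (deriv f2 x) x := (hf2.differentiable hone x).hasDerivAt
    exact ((h1.const_mul sa).sub ((h2.div_const c).const_mul (sb / τ))).deriv
  have hgfun : g = fun x => sa * κ x - sb / τ * (deriv κ x / c) := funext hg
  have hdg : deriv g = fun x => sa * deriv κ x - sb / τ * (deriv (deriv κ) x / c) := by
    rw [hgfun]; exact key κ (deriv κ) hκ' rfl hc1
  have hddg : deriv (deriv g)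
      = fun x => sa * deriv (deriv κ) x - sb / τ * (deriv (deriv (deriv κ)) x / c) := by
    rw [hdg]; exact key (deriv κ) (deriv (deriv κ)) hc1 rfl hc2
  have hdddg : deriv (deriv (deriv g))
      = fun x => sa * deriv (deriv (deriv κ)) x
          - sb / τ * (deriv (deriv (deriv (deriv κ))) x / c) := by
    rw [hddg]; exact key (deriv (deriv κ)) (deriv (deriv (deriv κ))) hc2 rfl hc3
  have hgC : ContDiff ℝ ((⊤ : ℕ∞) : WithTop ℕ∞) g := by
    rw [hgfun]; exact (contDiff_const.mul hκ').sub (contDiff_const.mul (hc1.div_const c))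
  have hdgC : ContDiff ℝ ((⊤ : ℕ∞) : WithTop ℕ∞) (deriv g) := by
    rw [hdg]; exact (contDiff_const.mul hc1).sub (contDiff_const.mul (hc2.div_const c))
  have hddgC : ContDiff ℝ ((⊤ : ℕ∞) : WithTop ℕ∞) (deriv (deriv g)) := by
    rw [hddg]; exact (contDiff_const.mul hc2).sub (contDiff_const.mul (hc3.div_const c))
  have hGfun : G = fun x => g x ^ 2 + d * (deriv g x) ^ 2 := funext hG
  have hdG : deriv G
      = fun x => 2 * g x * deriv g x + d * (2 * deriv g x * deriv (deriv g) x) := by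
    funext x
    have h1 : HasDerivAt g (deriv g x) x := (hgC.differentiable hone x).hasDerivAt
    have h2 : HasDerivAt (deriv g) (deriv (deriv g) x) x :=
      (hdgC.differentiable hone x).hasDerivAt
    have H : HasDerivAt (fun x => g x ^ 2 + d * (deriv g x) ^ 2)
        (2 * g x * deriv g x + d * (2 * deriv g x * deriv (deriv g) x)) x := by
      have := (h1.pow 2).add ((h2.pow 2).const_mul d)
      exact this.congr_deriv (by push_cast; ring)
    rw [hGfun]; exact H.deriv
  have hiG : iteratedDeriv 2 G = deriv (deriv G) := by
    simp [iteratedDeriv_succ, iteratedDeriv_zero]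
  have h1 : HasDerivAt g (deriv g 0) 0 := (hgC.differentiable hone 0).hasDerivAt
  have h2 : HasDerivAt (deriv g) (deriv (deriv g) 0) 0 :=
    (hdgC.differentiable hone 0).hasDerivAt
  have h3 : HasDerivAt (deriv (deriv g)) (deriv (deriv (deriv g)) 0) 0 :=
    (hddgC.differentiable hone 0).hasDerivAt
  have H2 : HasDerivAt
      (fun x => 2 * g x * deriv g x + d * (2 * deriv g x * deriv (deriv g) x))
      ((2 * deriv g 0) * deriv g 0 + (2 * g 0) * deriv (deriv g) 0
        + d * ((2 * deriv (deriv g) 0) * deriv (deriv g) 0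
            + (2 * deriv g 0) * deriv (deriv (deriv g)) 0)) 0 :=
    ((h1.const_mul 2).mul h2).add (((h2.const_mul 2).mul h3).const_mul d)
  have hG''0 : iteratedDeriv 2 G 0
      = (2 * deriv g 0) * deriv g 0 + (2 * g 0) * deriv (deriv g) 0
        + d * ((2 * deriv (deriv g) 0) * deriv (deriv g) 0
            + (2 * deriv g 0) * deriv (deriv (deriv g)) 0) := by
    rw [hiG, hdG]; exact H2.deriv
  have vg0 : g 0 = sa := by rw [hg 0, hκ'0]; simp [hκ0]
  -- main equality
  have main : iteratedDeriv 2 G 0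
      = 2 * a * (sa ^ 2 * (1 - τ ^ 2) + sb ^ 2 * (b / a ^ 2 - τ⁻¹ ^ 2)) := by
    rw [hG''0, vg0, hdddg, hddg, hdg]
    simp only [hκ'0, va2, va3, va4]
    rw [hddef, habs]
    have hac : a / c = -c := by field_simp; linarith
    rw [hac]
    field_simp
    ring_nf
    linear_combination (c ^ 2 * a * sb ^ 2) * hcsq
  clear key hdg hddg hdddg hgfun hGfun hdG hiG h1 h2 h3 H2 hG''0 hgC hdgC hddgC hκ' hc1 hc2 hc3 hg hG hκ vg0 h2eq h3eq h4eq va2 va3 va4 hκ'0 hκ0 hκ''' hone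
  clear_value a b c d
  clear ha hb hcdef hddef
  refine ⟨main, ?_, ?_⟩
  · intro ht1 ht2
    rw [main]
    have hb2 : a ^ 2 ≤ τ ^ 2 * b := by
      rw [div_le_iff₀ hκ4] at ht1; linarith
    have hq : 0 ≤ b / a ^ 2 - τ⁻¹ ^ 2 := by
      rw [sub_nonneg, le_div_iff₀ (by positivity : (0:ℝ) < a ^ 2)]
      have hinv : τ⁻¹ ^ 2 * τ ^ 2 = 1 := by field_simp
      nlinarith [sq_nonneg τ⁻¹]
    have hE : 0 ≤ sa ^ 2 * (1 - τ ^ 2) + sb ^ 2 * (b / a ^ 2 - τ⁻¹ ^ 2) := by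
      have := mul_nonneg (sq_nonneg sa) (by linarith : (0:ℝ) ≤ 1 - τ ^ 2)
      have := mul_nonneg (sq_nonneg sb) hq
      linarith
    nlinarith
  · intro ht1 ht2
    rw [main]
    have hb2 : a ^ 2 < τ ^ 2 * b := by
      rw [div_lt_iff₀ hκ4] at ht1; linarith
    have hq : 0 < b / a ^ 2 - τ⁻¹ ^ 2 := by
      rw [sub_pos, lt_div_iff₀ (by positivity : (0:ℝ) < a ^ 2)]
      have hinv : τ⁻¹ ^ 2 * τ ^ 2 = 1 := by field_simp
      nlinarith [sq_nonneg τ⁻¹, pow_pos (inv_pos.mpr hτ) 2]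
    have hp : 0 < 1 - τ ^ 2 := by linarith
    have hE : 0 < sa ^ 2 * (1 - τ ^ 2) + sb ^ 2 * (b / a ^ 2 - τ⁻¹ ^ 2) := by
      rcases eq_or_ne sa 0 with hsa | hsa
      · have hsb : sb ^ 2 = 1 := by rw [hsa] at hs; linarith [hs]
        rw [hsa, hsb]; simpa using hq
      · have : 0 < sa ^ 2 := by positivity
        nlinarith [mul_nonneg (sq_nonneg sb) hq.le]
    nlinarith
end

section
/- Let K̂₂(x) = τ^{−2}(τ²(x² − 1)² + x²) e^{−x²} with τ ∈ (0.8, 1]. Then K̂₂''(x) = τ^{−2}(4τ²x⁶ + (4 − 26τ²)x⁴ + (36τ² − 10)x² − 6τ² + 2) e^{−x²}, and for all |x| ≤ 0.3 one has K̂₂''(x) ≤ (1/10) K̂₂''(0) < 0. -/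
lemma gauss_hd (x : ℝ) :
    HasDerivAt (fun y : ℝ => Real.exp (-y ^ 2)) (Real.exp (-x ^ 2) * (-(2 * x))) x := by
  have h : HasDerivAt (fun y : ℝ => -y ^ 2) (-(2 * x)) x := by
    simpa using (hasDerivAt_pow 2 x).fun_neg
  exact h.exp

lemma hd_polyexp (a0 a1 a2 a3 a4 a5 a6 x : ℝ) :
    HasDerivAt
      (fun y : ℝ => (a6*y^6 + a5*y^5 + a4*y^4 + a3*y^3 + a2*y^2 + a1*y + a0) * Real.exp (-y^2))
      (((6*a6*x^5 + 5*a5*x^4 + 4*a4*x^3 + 3*a3*x^2 + 2*a2*x + a1)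
        - 2*x*(a6*x^6 + a5*x^5 + a4*x^4 + a3*x^3 + a2*x^2 + a1*x + a0)) * Real.exp (-x^2)) x := by
  have hp : HasDerivAt (fun y : ℝ => a6*y^6 + a5*y^5 + a4*y^4 + a3*y^3 + a2*y^2 + a1*y + a0)
      (6*a6*x^5 + 5*a5*x^4 + 4*a4*x^3 + 3*a3*x^2 + 2*a2*x + a1) x := by
    have h := ((((((((hasDerivAt_pow 6 x).const_mul a6).add
      ((hasDerivAt_pow 5 x).const_mul a5)).add
      ((hasDerivAt_pow 4 x).const_mul a4)).add
      ((hasDerivAt_pow 3 x).const_mul a3)).add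
      ((hasDerivAt_pow 2 x).const_mul a2)).add
      ((hasDerivAt_pow 1 x).const_mul a1)).add (hasDerivAt_const x a0))
    convert h using 1
    · rfl
    · rfl
    · funext y; simp only [Pi.add_apply]; ring
    · push_cast; ring
  have := hp.mul (gauss_hd x)
  convert this using 1
  · rfl
  · rfl
  · rfl
  ring

/-- Explicit second derivative of `K̂₂` for the Gaussian kernel and its negativity bound
near `0` for `τ ∈ (0.8, 1]`. -/
theorem stmt_14 (τ : ℝ) (hτ0 : 0.8 < τ) (hτ1 : τ ≤ 1) :
    (∀ x : ℝ,
      iteratedDeriv 2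
          (fun x : ℝ => τ⁻¹ ^ 2 * (τ ^ 2 * (x ^ 2 - 1) ^ 2 + x ^ 2) * Real.exp (-x ^ 2)) x
        = τ⁻¹ ^ 2 * (4 * τ ^ 2 * x ^ 6 + (4 - 26 * τ ^ 2) * x ^ 4
            + (36 * τ ^ 2 - 10) * x ^ 2 - 6 * τ ^ 2 + 2) * Real.exp (-x ^ 2))
    ∧ (∀ x : ℝ, |x| ≤ 0.3 →
        iteratedDeriv 2
            (fun x : ℝ => τ⁻¹ ^ 2 * (τ ^ 2 * (x ^ 2 - 1) ^ 2 + x ^ 2) * Real.exp (-x ^ 2)) x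
          ≤ (1 / 10) *
            iteratedDeriv 2
              (fun x : ℝ => τ⁻¹ ^ 2 * (τ ^ 2 * (x ^ 2 - 1) ^ 2 + x ^ 2) * Real.exp (-x ^ 2)) 0)
    ∧ (1 / 10) *
        iteratedDeriv 2
          (fun x : ℝ => τ⁻¹ ^ 2 * (τ ^ 2 * (x ^ 2 - 1) ^ 2 + x ^ 2) * Real.exp (-x ^ 2)) 0
        < 0 := by
  set c : ℝ := τ⁻¹ ^ 2 with hc
  -- first derivative
  have hF1 : ∀ x : ℝ, HasDerivAt
      (fun x : ℝ => c * (τ ^ 2 * (x ^ 2 - 1) ^ 2 + x ^ 2) * Real.exp (-x ^ 2))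
      (c * (-2*τ^2*x^5 + (8*τ^2 - 2)*x^3 + (2 - 6*τ^2)*x) * Real.exp (-x^2)) x := by
    intro x
    have h := hd_polyexp (c*τ^2) 0 (c*(1 - 2*τ^2)) 0 (c*τ^2) 0 0 x
    convert h using 1
    · funext y; ring_nf
    · ring
  have hF2 : ∀ x : ℝ, HasDerivAt
      (fun x : ℝ => c * (-2*τ^2*x^5 + (8*τ^2 - 2)*x^3 + (2 - 6*τ^2)*x) * Real.exp (-x^2))
      (c * (4 * τ ^ 2 * x ^ 6 + (4 - 26 * τ ^ 2) * x ^ 4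
            + (36 * τ ^ 2 - 10) * x ^ 2 - 6 * τ ^ 2 + 2) * Real.exp (-x ^ 2)) x := by
    intro x
    have h := hd_polyexp 0 (c*(2 - 6*τ^2)) 0 (c*(8*τ^2 - 2)) 0 (c*(-2*τ^2)) 0 x
    convert h using 1
    · funext y; ring_nf
    · ring
  have hderiv : ∀ x : ℝ,
      iteratedDeriv 2
          (fun x : ℝ => c * (τ ^ 2 * (x ^ 2 - 1) ^ 2 + x ^ 2) * Real.exp (-x ^ 2)) x
        = c * (4 * τ ^ 2 * x ^ 6 + (4 - 26 * τ ^ 2) * x ^ 4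
            + (36 * τ ^ 2 - 10) * x ^ 2 - 6 * τ ^ 2 + 2) * Real.exp (-x ^ 2) := by
    intro x
    rw [iteratedDeriv_succ, iteratedDeriv_one]
    have hd1 : deriv (fun x : ℝ => c * (τ ^ 2 * (x ^ 2 - 1) ^ 2 + x ^ 2) * Real.exp (-x ^ 2))
        = fun x : ℝ => c * (-2*τ^2*x^5 + (8*τ^2 - 2)*x^3 + (2 - 6*τ^2)*x) * Real.exp (-x^2) :=
      funext fun y => (hF1 y).deriv
    rw [hd1]
    exact (hF2 x).deriv
  have hτpos : (0 : ℝ) < τ := lt_trans (by norm_num) hτ0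
  have hcpos : 0 < c := by positivity
  have hs1 : 0.64 < τ ^ 2 := by nlinarith
  have hs2 : τ ^ 2 ≤ 1 := by nlinarith
  refine ⟨hderiv, ?_, ?_⟩
  · intro x hx
    rw [hderiv x, hderiv 0]
    have h0 : c * (4 * τ ^ 2 * (0:ℝ) ^ 6 + (4 - 26 * τ ^ 2) * 0 ^ 4
        + (36 * τ ^ 2 - 10) * 0 ^ 2 - 6 * τ ^ 2 + 2) * Real.exp (-(0:ℝ) ^ 2)
        = c * (2 - 6 * τ ^ 2) := by norm_num; exact Or.inl (by ring)
    rw [h0]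
    have hx2 : x ^ 2 ≤ 0.09 := by
      have := abs_nonneg x
      nlinarith [sq_abs x]
    have hE2 : 1 - x ^ 2 ≤ Real.exp (-x ^ 2) := by
      have := Real.add_one_le_exp (-x ^ 2)
      linarith
    have hx0 : 0 ≤ x ^ 2 := sq_nonneg x
    have hq : 4 * τ ^ 2 * x ^ 6 + (4 - 26 * τ ^ 2) * x ^ 4
        + (36 * τ ^ 2 - 10) * x ^ 2 - 6 * τ ^ 2 + 2 ≤ -0.7 := by
      nlinarith [sq_nonneg (x^2), sq_nonneg (x^3), mul_nonneg hx0 hx0,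
        mul_nonneg (mul_nonneg hx0 hx0) hx0,
        mul_nonneg hx0 (sub_nonneg.2 hx2),
        mul_nonneg (sub_nonneg.2 hx2) (sub_nonneg.2 hs1.le),
        mul_nonneg hx0 (sub_nonneg.2 hs1.le)]
    have key : (4 * τ ^ 2 * x ^ 6 + (4 - 26 * τ ^ 2) * x ^ 4
        + (36 * τ ^ 2 - 10) * x ^ 2 - 6 * τ ^ 2 + 2) * Real.exp (-x ^ 2)
        ≤ (1/10) * (2 - 6 * τ ^ 2) := by
      nlinarith [mul_le_mul_of_nonneg_right hq (Real.exp_nonneg (-x^2)), hE2, hx2, hs2]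
    calc c * (4 * τ ^ 2 * x ^ 6 + (4 - 26 * τ ^ 2) * x ^ 4
            + (36 * τ ^ 2 - 10) * x ^ 2 - 6 * τ ^ 2 + 2) * Real.exp (-x ^ 2)
        = c * ((4 * τ ^ 2 * x ^ 6 + (4 - 26 * τ ^ 2) * x ^ 4
            + (36 * τ ^ 2 - 10) * x ^ 2 - 6 * τ ^ 2 + 2) * Real.exp (-x ^ 2)) := by ring
      _ ≤ c * ((1/10) * (2 - 6 * τ ^ 2)) := mul_le_mul_of_nonneg_left key hcpos.le
      _ = (1/10) * (c * (2 - 6 * τ ^ 2)) := by ring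
  · rw [hderiv 0]
    have h0 : c * (4 * τ ^ 2 * (0:ℝ) ^ 6 + (4 - 26 * τ ^ 2) * 0 ^ 4
        + (36 * τ ^ 2 - 10) * 0 ^ 2 - 6 * τ ^ 2 + 2) * Real.exp (-(0:ℝ) ^ 2)
        = c * (2 - 6 * τ ^ 2) := by norm_num; exact Or.inl (by ring)
    rw [h0]
    nlinarith
end
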